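/- arXiv:0908.2853 — 5 statements merged into one kernel-verified Lean document; each statement's English description precedes it below -/
import Mathlib

section
/- Let f : F_p^n → F_p with bias(f) = δ. Then for at least a δ²/2 fraction of directions y ∈ F_p^n, the discrete derivative Δ_y(f) satisfies bias(Δ_y f) ≥ δ²/2. -/
/-!
Writing `S = ∑ₓ ω^{f x}`, expanding `|S|² = S · conj S` and substituting `z = x + y` gives
`|S|² = ∑_y ∑ₓ ω^{f (x + y) - f x}`, so by the triangle inequality `bias f ^ 2` is at most the
average of `bias (Δ_y f)` over `y`. Since every bias is at most `1`, an average of at least `δ²`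
forces `bias (Δ_y f) ≥ δ²/2` on at least a `δ²/2` fraction of the directions.
-/

open Finset
open scoped Classical

/-- The bias of a function `f : F_p^n → F_p`:
`bias f = |E_{a ∈ F_p^n} [ω^{f(a)}]|` where `ω = e^{2πi/p}`. -/
noncomputable def bias {p n : ℕ} [NeZero p] (f : (Fin n → ZMod p) → ZMod p) : ℝ :=
  ‖(∑ x : Fin n → ZMod p,
    Complex.exp (2 * Real.pi * Complex.I * ((f x).val : ℂ) / (p : ℂ))) / ((p : ℂ) ^ n)‖

open ComplexConjugate

namespace AddChar

variable {G R K : Type*} [AddCommGroup G] [Fintype G] [AddCommGroup R] [Finite R] [RCLike K]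

theorem sq_norm_sum_eq_sum_sum_sub (ψ : AddChar R K) (f : G → R) :
    ((‖∑ x, ψ (f x)‖ ^ 2 : ℝ) : K) = ∑ y, ∑ x, ψ (f (x + y) - f x) := by
  calc ((‖∑ x, ψ (f x)‖ ^ 2 : ℝ) : K)
      = ∑ x, ∑ z, conj (ψ (f x)) * ψ (f z) := by
        rw [RCLike.ofReal_pow, ← RCLike.conj_mul, map_sum, sum_mul_sum]
    _ = ∑ x, ∑ y, ψ (f (x + y) - f x) := by
        refine sum_congr rfl fun x _ => ?_
        rw [← Equiv.sum_comp (Equiv.addLeft x)]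
        simp [← map_neg_eq_conj, ← map_add_eq_mul, sub_eq_neg_add]
    _ = ∑ y, ∑ x, ψ (f (x + y) - f x) := sum_comm

theorem sq_norm_sum_le_sum_norm_sum_sub (ψ : AddChar R K) (f : G → R) :
    ‖∑ x, ψ (f x)‖ ^ 2 ≤ ∑ y, ‖∑ x, ψ (f (x + y) - f x)‖ :=
  calc ‖∑ x, ψ (f x)‖ ^ 2 = ‖((‖∑ x, ψ (f x)‖ ^ 2 : ℝ) : K)‖ := by
        rw [RCLike.norm_ofReal, abs_of_nonneg (by positivity)]
    _ = ‖∑ y, ∑ x, ψ (f (x + y) - f x)‖ := by rw [sq_norm_sum_eq_sum_sum_sub]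
    _ ≤ ∑ y, ‖∑ x, ψ (f (x + y) - f x)‖ := norm_sum_le _ _

end AddChar

theorem Finset.sum_le_card_filter_add_mul_card {α : Type*} [Fintype α] (g : α → ℝ)
    (hg : ∀ a, g a ≤ 1) {t : ℝ} (ht : 0 ≤ t) :
    ∑ a, g a ≤ #{a | t ≤ g a} + t * Fintype.card α := by
  rw [← sum_filter_add_sum_filter_not univ (fun a => t ≤ g a)]
  gcongr
  · simpa using sum_le_sum fun a (_ : a ∈ ({a | t ≤ g a} : Finset α)) => hg a
  · calc ∑ a ∈ {a | ¬t ≤ g a}, g a ≤ ∑ _a ∈ {a | ¬t ≤ g a}, t :=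
          sum_le_sum fun a ha => (not_le.1 (mem_filter.1 ha).2).le
      _ ≤ t * Fintype.card α := by
          rw [sum_const, nsmul_eq_mul, mul_comm]
          gcongr
          exact_mod_cast card_le_univ _

section bias

variable {p n : ℕ} [NeZero p]

theorem bias_eq_norm_sum_stdAddChar_div (f : (Fin n → ZMod p) → ZMod p) :
    bias f = ‖∑ x, ZMod.stdAddChar (f x)‖ / (p : ℝ) ^ n := by
  simp [bias, ZMod.stdAddChar_apply, ZMod.toCircle_apply]

theorem bias_le_one (f : (Fin n → ZMod p) → ZMod p) : bias f ≤ 1 := by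
  rw [bias_eq_norm_sum_stdAddChar_div, div_le_one (pow_pos (Nat.cast_pos.2 (NeZero.pos p)) n)]
  simpa [AddChar.norm_apply] using norm_sum_le univ fun x => ZMod.stdAddChar (f x)

theorem sq_bias_mul_card_le_sum_bias_sub (f : (Fin n → ZMod p) → ZMod p) :
    bias f ^ 2 * (p : ℝ) ^ n ≤ ∑ y, bias (fun x => f (x + y) - f x) := by
  have hN : (0 : ℝ) < (p : ℝ) ^ n := pow_pos (Nat.cast_pos.2 (NeZero.pos p)) n
  simp only [bias_eq_norm_sum_stdAddChar_div, ← sum_div]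
  rw [le_div_iff₀ hN, div_pow, mul_assoc, ← sq, div_mul_cancel₀ _ (pow_ne_zero 2 hN.ne')]
  exact AddChar.sq_norm_sum_le_sum_norm_sum_sub _ f

end bias

/-- If `bias f = δ`, then for at least a `δ²/2` fraction of the directions `y`,
the derivative `Δ_y f` satisfies `bias (Δ_y f) ≥ δ²/2`. -/
theorem stmt_1 {p n : ℕ} [Fact p.Prime] (f : (Fin n → ZMod p) → ZMod p) (δ : ℝ)
    (hδ : bias f = δ) :
    (δ ^ 2 / 2) * (p : ℝ) ^ n ≤
      ((Finset.univ.filter fun y : Fin n → ZMod p =>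
        δ ^ 2 / 2 ≤ bias (fun x => f (x + y) - f x)).card : ℝ) := by
  subst hδ
  have h_sum := sq_bias_mul_card_le_sum_bias_sub f
  have h_split := sum_le_card_filter_add_mul_card (fun y => bias fun x => f (x + y) - f x)
    (fun y => bias_le_one _) (by positivity : 0 ≤ bias f ^ 2 / 2)
  simp only [Fintype.card_fun, ZMod.card, Fintype.card_fin, Nat.cast_pow] at h_sum h_split
  linarith
end

section
/- Let F : V → ℝ≥0 be a subadditive function on a linear subspace V ⊆ F^n, meaning F(αu + v) ≤ F(u) + F(v) for all u,v ∈ V and α ∈ F. Let A_r = {x ∈ V : F(x) ≤ r}. If |A_r| ≥ μ|V|, then there exists a subspace W ⊆ V of codimension O(log(1/μ)) such that F(y) = O(r·log(1/μ)) for every y ∈ W. -/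
/-!
Grow a subspace `K`, starting from `0`, by adjoining differences `a - b` of points of
`A_r = {F ≤ r}` (on which `F ≤ 2r`), and watch `B = A_r + K`. If some `d ∈ B - B` moves at
least half of `B`, then `d ∈ a - b + K` and adjoining `a - b` makes `B ∪ (d + B) ⊆ A_r + K'`,
so `|B|` grows by a factor `3/2`; since `|B| ≤ |V|` this happens at most `log_{3/2} (1/μ)`
times. Otherwise every `d ∈ B - B` is an almost period, `|B \ (d + B)| < |B|/2`, so
`B ∩ (d + d' + B) ≠ ∅` and `B - B` is closed under addition: it is a subgroup, hence a
subspace over the prime field, of size at least `|B| ≥ μ|V|`, on which `F ≤ 2r + max_K F`.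
-/

open Finset

open scoped Pointwise

section AlmostPeriods

variable {G : Type*} [AddCommGroup G] [DecidableEq G]

lemma card_sdiff_add_vadd_le (B : Finset G) (a b : G) :
    #(B \ ((a + b) +ᵥ B)) ≤ #(B \ (a +ᵥ B)) + #(B \ (b +ᵥ B)) := by
  have hshift : #((b +ᵥ B) \ ((a + b) +ᵥ B)) = #(B \ (a +ᵥ B)) := by
    rw [add_comm, add_vadd, ← vadd_finset_sdiff, card_vadd_finset]
  calc #(B \ ((a + b) +ᵥ B))
      ≤ #(B \ (b +ᵥ B) ∪ (b +ᵥ B) \ ((a + b) +ᵥ B)) := card_le_card (sdiff_triangle _ _ _)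
    _ ≤ #(B \ (b +ᵥ B)) + #((b +ᵥ B) \ ((a + b) +ᵥ B)) := card_union_le _ _
    _ = #(B \ (a +ᵥ B)) + #(B \ (b +ᵥ B)) := by rw [hshift, add_comm]

lemma add_mem_sub_self_of_two_mul_card_sdiff_vadd_lt {B : Finset G}
    (hB : ∀ d ∈ B - B, 2 * #(B \ (d +ᵥ B)) < #B) {a b : G} (ha : a ∈ B - B) (hb : b ∈ B - B) :
    a + b ∈ B - B := by
  have hlt : #(B \ ((a + b) +ᵥ B)) < #B := by
    have := card_sdiff_add_vadd_le B a b
    have := hB a ha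
    have := hB b hb
    omega
  obtain ⟨x, hxB, hx⟩ := exists_mem_notMem_of_card_lt_card hlt
  obtain ⟨y, hyB, rfl⟩ := mem_vadd_finset.mp (by simpa [hxB] using hx)
  simpa using sub_mem_sub hxB hyB

lemma exists_addSubgroup_coe_eq_sub_self {B : Finset G} (hne : B.Nonempty)
    (hB : ∀ d ∈ B - B, 2 * #(B \ (d +ᵥ B)) < #B) :
    ∃ H : AddSubgroup G, (H : Set G) = ↑(B - B) := by
  have hneg : ∀ d ∈ B - B, -d ∈ B - B := by
    intro d hd
    obtain ⟨x, hx, y, hy, rfl⟩ := mem_sub.mp hd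
    simpa using sub_mem_sub hy hx
  refine ⟨AddSubgroup.ofSub _ (hne.sub hne).to_set fun a ha b hb ↦ ?_, rfl⟩
  exact add_mem_sub_self_of_two_mul_card_sdiff_vadd_lt hB ha (hneg b hb)

end AlmostPeriods

def IsSubadditive (𝕜 : Type*) {M : Type*} [Add M] [SMul 𝕜 M] (F : M → ℝ) : Prop :=
  ∀ (u v : M) (α : 𝕜), F (α • u + v) ≤ F u + F v

namespace IsSubadditive

variable {𝕜 M : Type*} [Ring 𝕜] [AddCommGroup M] [Module 𝕜 M] {F : M → ℝ}

lemma add_le (hF : IsSubadditive 𝕜 F) (u v : M) : F (u + v) ≤ F u + F v := by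
  simpa using hF u v 1

lemma sub_le (hF : IsSubadditive 𝕜 F) (u v : M) : F (u - v) ≤ F u + F v := by
  simpa [neg_add_eq_sub, add_comm (F v)] using hF v u (-1)

lemma le_add_of_mem_sup_span_singleton (hF : IsSubadditive 𝕜 F) {K : Submodule 𝕜 M} {c : ℝ}
    (hK : ∀ k ∈ K, F k ≤ c) (s : M) : ∀ x ∈ K ⊔ 𝕜 ∙ s, F x ≤ F s + c := by
  intro x hx
  obtain ⟨k, hk, _, hz, rfl⟩ := Submodule.mem_sup.mp hx
  obtain ⟨β, rfl⟩ := Submodule.mem_span_singleton.mp hz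
  simpa [add_comm k] using (hF s k β).trans (by linarith [hK k hk])

end IsSubadditive

section Sublevel

variable {p : ℕ} {M : Type*} [AddCommGroup M] [Module (ZMod p) M] [Fintype M]
  {F : M → ℝ} {r c : ℝ}

open scoped Classical in
/-- `A_r + K`, where `A_r = {x | F x ≤ r}`. -/
noncomputable def sublevelAdd (F : M → ℝ) (r : ℝ) (K : Submodule (ZMod p) M) : Finset M :=
  {x | ∃ k ∈ K, F (x - k) ≤ r}

lemma mem_sublevelAdd {K : Submodule (ZMod p) M} {x : M} :
    x ∈ sublevelAdd F r K ↔ ∃ k ∈ K, F (x - k) ≤ r := by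
  simp [sublevelAdd]

lemma sublevelAdd_bot :
    sublevelAdd F r (⊥ : Submodule (ZMod p) M) = ({x | F x ≤ r} : Finset M) := by
  ext x
  simp [mem_sublevelAdd]

lemma sublevelAdd_mono {K K' : Submodule (ZMod p) M} (h : K ≤ K') :
    sublevelAdd F r K ⊆ sublevelAdd F r K' := fun x hx ↦ by
  obtain ⟨k, hk, hxk⟩ := mem_sublevelAdd.mp hx
  exact mem_sublevelAdd.mpr ⟨k, h hk, hxk⟩

variable [DecidableEq M]

lemma exists_sub_add_eq_of_mem_sub {K : Submodule (ZMod p) M} {d : M}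
    (hd : d ∈ sublevelAdd F r K - sublevelAdd F r K) :
    ∃ a b, F a ≤ r ∧ F b ≤ r ∧ ∃ k ∈ K, d = a - b + k := by
  obtain ⟨x, hx, y, hy, rfl⟩ := mem_sub.mp hd
  obtain ⟨k, hk, hxk⟩ := mem_sublevelAdd.mp hx
  obtain ⟨l, hl, hyl⟩ := mem_sublevelAdd.mp hy
  exact ⟨_, _, hxk, hyl, k - l, K.sub_mem hk hl, by abel⟩

lemma exists_card_sublevelAdd_ge_of_two_mul_card_sdiff_ge {K : Submodule (ZMod p) M}
    (hF : IsSubadditive (ZMod p) F) (hK : ∀ k ∈ K, F k ≤ c) {d : M}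
    (hd : d ∈ sublevelAdd F r K - sublevelAdd F r K)
    (hgrow : #(sublevelAdd F r K) ≤ 2 * #(sublevelAdd F r K \ (d +ᵥ sublevelAdd F r K))) :
    ∃ K' : Submodule (ZMod p) M, (∀ k ∈ K', F k ≤ 2 * r + c) ∧
      3 * #(sublevelAdd F r K) ≤ 2 * #(sublevelAdd F r K') := by
  set B := sublevelAdd F r K
  obtain ⟨a, b, ha, hb, k, hk, rfl⟩ := exists_sub_add_eq_of_mem_sub hd
  refine ⟨K ⊔ ZMod p ∙ (a - b), fun x hx ↦ ?_, ?_⟩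
  · linarith [hF.le_add_of_mem_sup_span_singleton hK (a - b) x hx, hF.sub_le a b]
  have htranslate : (a - b + k) +ᵥ B ⊆ sublevelAdd F r (K ⊔ ZMod p ∙ (a - b)) := by
    intro y hy
    obtain ⟨x, hx, rfl⟩ := mem_vadd_finset.mp hy
    obtain ⟨l, hl, hxl⟩ := mem_sublevelAdd.mp hx
    refine mem_sublevelAdd.mpr ⟨(k + l) + (a - b), ?_, ?_⟩
    · exact Submodule.add_mem_sup (K.add_mem hk hl) (Submodule.mem_span_singleton_self _)
    · convert hxl using 2
      rw [vadd_eq_add]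
      abel
  have hunion : #B + #(B \ ((a - b + k) +ᵥ B)) = #(B ∪ ((a - b + k) +ᵥ B)) := by
    rw [card_sdiff_comm (card_vadd_finset _ _).symm, add_comm, card_sdiff_add_card, union_comm]
  have hsub : B ∪ ((a - b + k) +ᵥ B) ⊆ sublevelAdd F r (K ⊔ ZMod p ∙ (a - b)) :=
    union_subset (sublevelAdd_mono le_sup_left) htranslate
  have := card_le_card hsub
  omega

lemma exists_submodule_card_ge_of_two_mul_card_sdiff_lt {K : Submodule (ZMod p) M}
    (hF : IsSubadditive (ZMod p) F) (hK : ∀ k ∈ K, F k ≤ c) (hne : (sublevelAdd F r K).Nonempty)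
    (hB : ∀ d ∈ sublevelAdd F r K - sublevelAdd F r K,
      2 * #(sublevelAdd F r K \ (d +ᵥ sublevelAdd F r K)) < #(sublevelAdd F r K)) :
    ∃ W : Submodule (ZMod p) M, #(sublevelAdd F r K) ≤ Nat.card W ∧ ∀ w ∈ W, F w ≤ 2 * r + c := by
  obtain ⟨H, hH⟩ := exists_addSubgroup_coe_eq_sub_self hne hB
  refine ⟨AddSubgroup.toZModSubmodule p H, ?_, fun w hw ↦ ?_⟩
  · have hcard : Nat.card (AddSubgroup.toZModSubmodule p H) =
        #(sublevelAdd F r K - sublevelAdd F r K) := by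
      rw [← Set.ncard_coe_finset, ← hH, ← Nat.card_coe_set_eq]
      rfl
    exact hcard ▸ card_le_card_sub_self
  · obtain ⟨a, b, ha, hb, k, hk, rfl⟩ := exists_sub_add_eq_of_mem_sub
      (show w ∈ (↑(sublevelAdd F r K - sublevelAdd F r K) : Set M) from hH ▸ hw)
    linarith [hF.add_le (a - b) k, hF.sub_le a b, hK k hk]

lemma exists_card_sublevelAdd_ge_or_exists_submodule {K : Submodule (ZMod p) M}
    (hF : IsSubadditive (ZMod p) F) (hK : ∀ k ∈ K, F k ≤ c) (hne : (sublevelAdd F r K).Nonempty) :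
    (∃ K' : Submodule (ZMod p) M, (∀ k ∈ K', F k ≤ 2 * r + c) ∧
      3 * #(sublevelAdd F r K) ≤ 2 * #(sublevelAdd F r K')) ∨
    ∃ W : Submodule (ZMod p) M, #(sublevelAdd F r K) ≤ Nat.card W ∧ ∀ w ∈ W, F w ≤ 2 * r + c := by
  by_cases hgrow : ∃ d ∈ sublevelAdd F r K - sublevelAdd F r K,
      #(sublevelAdd F r K) ≤ 2 * #(sublevelAdd F r K \ (d +ᵥ sublevelAdd F r K))
  · obtain ⟨d, hd, hgrow⟩ := hgrow
    exact .inl (exists_card_sublevelAdd_ge_of_two_mul_card_sdiff_ge hF hK hd hgrow)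
  · push Not at hgrow
    exact .inr (exists_submodule_card_ge_of_two_mul_card_sdiff_lt hF hK hne hgrow)

theorem exists_submodule_card_ge_of_card_sublevel_ge (hF : IsSubadditive (ZMod p) F)
    {μ : ℝ} (hμ : 0 < μ) (hA : μ * Nat.card M ≤ Nat.card {x // F x ≤ r}) :
    ∃ (W : Submodule (ZMod p) M) (t : ℕ), μ * (3 / 2) ^ t ≤ 1 ∧
      μ * Nat.card M ≤ Nat.card W ∧ ∀ w ∈ W, F w ≤ 2 * r * (t + 2) := by
  rw [Nat.card_eq_fintype_card, Nat.card_eq_fintype_card, Fintype.card_subtype] at hA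
  rw [Nat.card_eq_fintype_card]
  set P : ℕ → Prop := fun t ↦ ∃ K : Submodule (ZMod p) M,
    (∀ k ∈ K, F k ≤ 2 * r * (t + 1)) ∧ μ * Fintype.card M * (3 / 2) ^ t ≤ #(sublevelAdd F r K)
  have hM : (0 : ℝ) < Fintype.card M := by exact_mod_cast Fintype.card_pos
  have hP_le : ∀ t, P t → μ * (3 / 2) ^ t ≤ 1 := by
    rintro t ⟨K, -, hK⟩
    have : (#(sublevelAdd F r K) : ℝ) ≤ Fintype.card M := by exact_mod_cast card_le_univ _
    nlinarith
  obtain ⟨a, ha⟩ : ({x | F x ≤ r} : Finset M).Nonempty :=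
    card_pos.mp (by exact_mod_cast (mul_pos hμ hM).trans_le hA)
  have hP_zero : P 0 := by
    refine ⟨⊥, fun k hk ↦ ?_, by rw [pow_zero, mul_one, sublevelAdd_bot]; exact hA⟩
    rw [(Submodule.mem_bot _).mp hk]
    have := hF.sub_le a a
    simp only [mem_filter, mem_univ, true_and, sub_self] at ha this
    push_cast
    linarith
  obtain ⟨t, ⟨K, hK, hKcard⟩, hP_succ⟩ : ∃ t, P t ∧ ¬ P (t + 1) := by
    by_contra! h
    obtain ⟨t, ht⟩ := pow_unbounded_of_one_lt μ⁻¹ (by norm_num : (1 : ℝ) < 3 / 2)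
    have := hP_le t (Nat.rec hP_zero h t)
    rw [inv_lt_iff_one_lt_mul₀' hμ] at ht
    linarith
  have hne : (sublevelAdd F r K).Nonempty :=
    card_pos.mp (by exact_mod_cast (by positivity : (0 : ℝ) < _).trans_le hKcard)
  obtain ⟨K', hK', hcard⟩ | ⟨W, hW, hFW⟩ :=
    exists_card_sublevelAdd_ge_or_exists_submodule hF hK hne
  · refine absurd ⟨K', fun k hk ↦ ?_, ?_⟩ hP_succ
    · push_cast
      linarith [hK' k hk]
    · have : (3 : ℝ) * #(sublevelAdd F r K) ≤ 2 * #(sublevelAdd F r K') := by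
        exact_mod_cast hcard
      rw [pow_succ]
      linarith
  · refine ⟨W, t, hP_le t ⟨K, hK, hKcard⟩, ?_, fun w hw ↦ by linarith [hFW w hw]⟩
    have : (#(sublevelAdd F r K) : ℝ) ≤ Nat.card W := by exact_mod_cast hW
    nlinarith [one_le_pow₀ (by norm_num : (1 : ℝ) ≤ 3 / 2) (n := t)]

end Sublevel

lemma cast_mul_one_sub_inv_le_log_one_div {μ b : ℝ} {t : ℕ} (hμ : 0 < μ) (hb : 0 < b)
    (h : μ * b ^ t ≤ 1) : t * (1 - b⁻¹) ≤ Real.log (1 / μ) := by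
  have hpow : b ^ t ≤ 1 / μ := by rw [le_div_iff₀ hμ]; linarith
  calc t * (1 - b⁻¹) ≤ t * Real.log b := by gcongr; exact Real.one_sub_inv_le_log_of_pos hb
    _ = Real.log (b ^ t) := by rw [Real.log_pow]
    _ ≤ Real.log (1 / μ) := Real.log_le_log (by positivity) hpow

lemma mul_natCard_pow_sub_finrank_le_one {𝕜 M : Type*} [Field 𝕜] [Finite 𝕜] [AddCommGroup M]
    [Module 𝕜 M] [Module.Finite 𝕜 M] {W : Submodule 𝕜 M} {μ : ℝ}
    (h : μ * Nat.card M ≤ Nat.card W) :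
    μ * (Nat.card 𝕜 : ℝ) ^ (Module.finrank 𝕜 M - Module.finrank 𝕜 W) ≤ 1 := by
  have hq : (0 : ℝ) < Nat.card 𝕜 := by exact_mod_cast Nat.card_pos
  have hM : Nat.card M = Nat.card 𝕜 ^ Module.finrank 𝕜 M := Module.natCard_eq_pow_finrank
  have hW : Nat.card W = Nat.card 𝕜 ^ Module.finrank 𝕜 W := Module.natCard_eq_pow_finrank
  rw [hM, hW] at h
  push_cast at h
  rw [← Nat.sub_add_cancel (Submodule.finrank_le W), pow_add] at h
  nlinarith [pow_pos hq (Module.finrank 𝕜 W)]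

/-- Subadditive functions on a subspace: if the set `A_r = {x ∈ V : 𝓕(x) ≤ r}` has
density at least `μ` in `V`, then there is a subspace `W ≤ V` of codimension
`O(log(1/μ))` on which `𝓕 = O(r·log(1/μ))`; the constants depend only on `|F| = p`. -/
theorem stmt_4 (p : ℕ) [Fact p.Prime] :
    ∃ C : ℝ, 0 < C ∧
      ∀ (n : ℕ) (V : Submodule (ZMod p) (Fin n → ZMod p)) (F : V → ℝ) (r μ : ℝ),
        (∀ x : V, 0 ≤ F x) →
        (∀ (u v : V) (α : ZMod p), F (α • u + v) ≤ F u + F v) →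
        0 ≤ r → 0 < μ → μ ≤ 1 →
        μ * Nat.card V ≤ Nat.card {x : V // F x ≤ r} →
        ∃ W : Submodule (ZMod p) (Fin n → ZMod p), W ≤ V ∧
          (Module.finrank (ZMod p) V : ℝ) ≤
            Module.finrank (ZMod p) W + C * (Real.log (1 / μ) + 1) ∧
          ∀ y : V, (y : Fin n → ZMod p) ∈ W → F y ≤ C * r * (Real.log (1 / μ) + 1) := by
  classical
  refine ⟨6, by norm_num, fun n V F r μ _ hF hr hμ hμ1 hA ↦ ?_⟩
  obtain ⟨W, t, ht, hW, hFW⟩ := exists_submodule_card_ge_of_card_sublevel_ge hF hμ hA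
  have hL : 0 ≤ Real.log (1 / μ) := Real.log_nonneg (by rw [le_div_iff₀ hμ]; linarith)
  have hcodim := cast_mul_one_sub_inv_le_log_one_div hμ (by simp [(Fact.out : p.Prime).pos])
    (mul_natCard_pow_sub_finrank_le_one hW)
  have ht' := cast_mul_one_sub_inv_le_log_one_div hμ (by norm_num) ht
  have hp : (Nat.card (ZMod p) : ℝ)⁻¹ ≤ 2⁻¹ := by
    rw [Nat.card_zmod]
    gcongr
    exact_mod_cast (Fact.out : p.Prime).two_le
  refine ⟨W.map V.subtype, Submodule.map_subtype_le V W, ?_, fun y hy ↦ ?_⟩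
  · rw [Submodule.finrank_map_subtype_eq]
    rw [Nat.cast_sub (Submodule.finrank_le W)] at hcodim
    nlinarith
  · obtain ⟨z, hz, hzy⟩ := Submodule.mem_map.mp hy
    rw [← Subtype.ext hzy]
    nlinarith [hFW z hz]
end

section
/- Let f be a cubic polynomial over a prime field F. Then for all y, z ∈ F^n, Δ_{y+z}(f) = Δ_y(f) + Δ_z(f) + Δ_y(Δ_z f)(·), where Δ_y(Δ_z f) has degree at most 1; consequently the function 𝓕(y) = rank₂(Δ_y(f)) is subadditive: 𝓕(αu + v) ≤ 𝓕(u) + 𝓕(v) for all u,v ∈ F^n and α ∈ F. -/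
open Finset

/-- `f` agrees with a polynomial of total degree at most `d`. -/
def IsPolyDegLE {K : Type*} [CommSemiring K] {σ : Type*} (f : (σ → K) → K) (d : ℕ) : Prop :=
  ∃ P : MvPolynomial σ K, P.totalDegree ≤ d ∧ ∀ x, MvPolynomial.eval x P = f x

/-- `q` can be written as a sum of `r` products of two linear forms plus an
affine function. -/
def HasRank2 {K : Type*} [Field K] {M : Type*} [AddCommGroup M] [Module K M]
    (q : M → K) (r : ℕ) : Prop :=
  ∃ (L L' : Fin r → M →ₗ[K] K) (L0 : M →ₗ[K] K) (b : K),
    ∀ x, q x = (∑ i, L i x * L' i x) + L0 x + b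

/-- `rank₂ q`: the minimal `r` in such a representation. -/
noncomputable def rank2 {K : Type*} [Field K] {M : Type*} [AddCommGroup M] [Module K M]
    (q : M → K) : ℕ :=
  sInf {r | HasRank2 q r}


/-!
Translating by `y` lowers the total degree: `P(x + y) - P(x)` has degree `< deg P`, since on a
monomial `m · X i` the leading term cancels. Hence for cubic `f` the second difference
`Δ_z Δ_y f = Δ_{y+z} f - Δ_y f - Δ_z f` is affine, i.e. `u ↦ Δ_u f` is additive modulo affine
functions, and therefore linear over the prime field: `Δ_{αu+v} f ≡ α Δ_u f + Δ_v f`. Each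
`Δ_u f` is quadratic, so it has a finite `rank₂`, and `rank₂` is subadditive, invariant under
scaling, and unchanged by adding affine functions.
-/

open MvPolynomial fwdDiff

section PolyDegLE

variable {σ K : Type*}

section CommSemiring
variable [CommSemiring K]

def polyDegLE (σ K : Type*) [CommSemiring K] (d : ℕ) : Submodule K ((σ → K) → K) where
  carrier := {f | IsPolyDegLE f d}
  zero_mem' := ⟨0, by simp, by simp⟩
  add_mem' := by
    rintro f g ⟨P, hP, hPf⟩ ⟨Q, hQ, hQg⟩
    exact ⟨P + Q, (totalDegree_add P Q).trans (max_le hP hQ), fun x => by simp [hPf, hQg]⟩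
  smul_mem' := by
    rintro c f ⟨P, hP, hPf⟩
    exact ⟨c • P, (totalDegree_smul_le c P).trans hP, fun x => by simp [hPf]⟩

theorem IsPolyDegLE.add {d : ℕ} {f g : (σ → K) → K} (hf : IsPolyDegLE f d)
    (hg : IsPolyDegLE g d) : IsPolyDegLE (f + g) d :=
  (polyDegLE σ K d).add_mem hf hg

@[elab_as_elim]
theorem IsPolyDegLE.induction_on {d : ℕ} {motive : ((σ → K) → K) → Prop} (zero : motive 0)
    (add : ∀ f g, motive f → motive g → motive (f + g))
    (monomial : ∀ s a, s.degree ≤ d → motive fun x => eval x (monomial s a))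
    {f : (σ → K) → K} (hf : IsPolyDegLE f d) : motive f := by
  obtain ⟨P, hP, hPf⟩ := hf
  have hsum : f = ∑ s ∈ P.support, fun x => eval x (MvPolynomial.monomial s (coeff s P)) := by
    ext x
    rw [← hPf, Finset.sum_apply, ← map_sum, ← as_sum]
  rw [hsum]
  exact Finset.sum_induction _ motive add zero
    fun s hs => monomial s _ ((le_totalDegree hs).trans hP)

end CommSemiring

variable [CommRing K]

noncomputable def MvPolynomial.translate (y : σ → K) : MvPolynomial σ K →ₐ[K] MvPolynomial σ K :=
  bind₁ fun i => X i + C (y i)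

theorem MvPolynomial.eval_translate (y x : σ → K) (P : MvPolynomial σ K) :
    eval x (translate y P) = eval (x + y) P := by
  rw [translate, ← coe_aeval_eq_eval, AlgHom.coe_toRingHom, aeval_bind₁]
  simp only [map_add, aeval_X, aeval_C]
  rfl

variable [IsDomain K]

theorem MvPolynomial.translate_sub_eq_zero_or_totalDegree_lt (y : σ → K) (s : σ →₀ ℕ) (a : K) :
    translate y (monomial s a) - monomial s a = 0 ∨
      (translate y (monomial s a) - monomial s a).totalDegree < (monomial s a).totalDegree := by
  refine induction_on_monomial
    (motive := fun P => translate y P - P = 0 ∨ (translate y P - P).totalDegree < P.totalDegree)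
    (fun a => Or.inl (by simp [translate])) (fun p i ih => ?_) s a
  rcases eq_or_ne p 0 with rfl | hp
  · simp
  right
  have hdeg : (p * X i).totalDegree = p.totalDegree + 1 := by
    rw [totalDegree_mul_of_isDomain hp (X_ne_zero i), totalDegree_X]
  have hsplit : translate y (p * X i) - p * X i
      = (translate y p - p) * (X i + C (y i)) + p * C (y i) := by
    simp only [map_mul, translate, bind₁_X_right]
    ring
  have hfirst : ((translate y p - p) * (X i + C (y i))).totalDegree ≤ p.totalDegree := by
    rcases ih with h | h
    · simp [h]
    calc _ ≤ (translate y p - p).totalDegree + (X i + C (y i)).totalDegree := totalDegree_mul _ _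
      _ ≤ (translate y p - p).totalDegree + 1 := by
        gcongr
        exact (totalDegree_add _ _).trans (by simp)
      _ ≤ p.totalDegree := h
  have hsecond : (p * C (y i)).totalDegree ≤ p.totalDegree :=
    (totalDegree_mul _ _).trans (by simp)
  rw [hsplit, hdeg, Nat.lt_succ_iff]
  exact (totalDegree_add _ _).trans (max_le hfirst hsecond)

theorem IsPolyDegLE.fwdDiff {d : ℕ} {f : (σ → K) → K} (hf : IsPolyDegLE f (d + 1)) (y : σ → K) :
    IsPolyDegLE (Δ_[y] f) d := by
  refine hf.induction_on ⟨0, by simp, fun _ => (sub_self _).symm⟩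
    (fun f g hf hg => by rw [fwdDiff_add]; exact hf.add hg) fun s a hs => ?_
  refine ⟨translate y (monomial s a) - monomial s a, ?_, fun x => by
    simp only [map_sub, eval_translate]; rfl⟩
  rcases translate_sub_eq_zero_or_totalDegree_lt y s a with h | h
  · simp [h]
  · have := (totalDegree_monomial_le s a).trans hs
    omega

theorem IsPolyDegLE.secondDiff {d : ℕ} {f : (σ → K) → K} (hf : IsPolyDegLE f (d + 2))
    (y z : σ → K) : IsPolyDegLE (fun x => f (x + y + z) - f (x + y) - f (x + z) + f x) d := by
  convert (hf.fwdDiff y).fwdDiff z using 1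
  ext x
  change _ = f (x + z + y) - f (x + z) - (f (x + y) - f x)
  rw [add_right_comm x z y]
  ring

end PolyDegLE

section Rank
variable {K M : Type*} [Field K] [AddCommGroup M] [Module K M]

theorem HasRank2.zero : HasRank2 (0 : M → K) 0 :=
  ⟨Fin.elim0, Fin.elim0, 0, 0, fun x => by simp⟩

theorem HasRank2.add {q₁ q₂ : M → K} {r₁ r₂ : ℕ} (h₁ : HasRank2 q₁ r₁) (h₂ : HasRank2 q₂ r₂) :
    HasRank2 (q₁ + q₂) (r₁ + r₂) := by
  obtain ⟨L₁, L₁', L₁₀, b₁, hq₁⟩ := h₁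
  obtain ⟨L₂, L₂', L₂₀, b₂, hq₂⟩ := h₂
  refine ⟨Fin.append L₁ L₂, Fin.append L₁' L₂', L₁₀ + L₂₀, b₁ + b₂, fun x => ?_⟩
  simp only [Pi.add_apply, hq₁, hq₂, Fin.sum_univ_add, Fin.append_left, Fin.append_right,
    LinearMap.add_apply]
  ring

theorem HasRank2.const_smul {q : M → K} {r : ℕ} (c : K) (h : HasRank2 q r) :
    HasRank2 (c • q) r := by
  obtain ⟨L, L', L₀, b, hq⟩ := h
  refine ⟨fun i => c • L i, L', c • L₀, c * b, fun x => ?_⟩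
  simp only [Pi.smul_apply, smul_eq_mul, hq, LinearMap.smul_apply, mul_add, Finset.mul_sum,
    mul_assoc]

theorem rank2_le {q : M → K} {r : ℕ} (h : HasRank2 q r) : rank2 q ≤ r :=
  Nat.sInf_le h

theorem hasRank2_rank2 {q : M → K} (h : ∃ r, HasRank2 q r) : HasRank2 q (rank2 q) :=
  Nat.sInf_mem h

theorem rank2_le_add_of_hasRank2_sub {q q₁ q₂ : M → K} (c : K) (h₁ : ∃ r, HasRank2 q₁ r)
    (h₂ : ∃ r, HasRank2 q₂ r) (h : HasRank2 (q - c • q₁ - q₂) 0) :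
    rank2 q ≤ rank2 q₁ + rank2 q₂ := by
  have := (((hasRank2_rank2 h₁).const_smul c).add (hasRank2_rank2 h₂)).add h
  rw [sub_sub, add_sub_cancel] at this
  exact rank2_le this

end Rank

section LowDegree

theorem Finsupp.exists_eq_add_single_one {σ : Type*} {m : σ →₀ ℕ} (hm : m ≠ 0) :
    ∃ m' i, m = m' + Finsupp.single i 1 := by
  obtain ⟨i, hi⟩ := Finsupp.ne_iff.mp hm
  exact ⟨m - Finsupp.single i 1, i, (tsub_add_cancel_of_le
    (Finsupp.single_le_iff.mpr (Nat.one_le_iff_ne_zero.mpr hi))).symm⟩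

theorem Finsupp.eq_zero_or_eq_single_of_degree_le_one {σ : Type*} {m : σ →₀ ℕ}
    (hm : m.degree ≤ 1) : m = 0 ∨ ∃ i, m = Finsupp.single i 1 := by
  rcases eq_or_ne m 0 with h | h
  · exact .inl h
  obtain ⟨m', i, rfl⟩ := Finsupp.exists_eq_add_single_one h
  have : m'.degree = 0 := by rw [map_add, Finsupp.degree_single] at hm; omega
  rw [Finsupp.degree_eq_zero_iff] at this
  exact .inr ⟨i, by simp [this]⟩

theorem Finsupp.degree_le_one_or_eq_single_add_single {σ : Type*} {m : σ →₀ ℕ}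
    (hm : m.degree ≤ 2) :
    m.degree ≤ 1 ∨ ∃ i j, m = Finsupp.single i 1 + Finsupp.single j 1 := by
  rcases le_or_gt m.degree 1 with h | h
  · exact .inl h
  obtain ⟨m', j, rfl⟩ := Finsupp.exists_eq_add_single_one (m := m) (by rintro rfl; simp at h)
  rw [map_add, Finsupp.degree_single] at hm
  rcases Finsupp.eq_zero_or_eq_single_of_degree_le_one (m := m') (by omega) with rfl | ⟨i, rfl⟩
  · simp at h
  · exact .inr ⟨i, j, rfl⟩

variable {σ K : Type*} [Field K]

theorem hasRank2_zero_eval_monomial {s : σ →₀ ℕ} (hs : s.degree ≤ 1) (a : K) :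
    HasRank2 (fun x => eval x (monomial s a)) 0 := by
  rcases Finsupp.eq_zero_or_eq_single_of_degree_le_one hs with rfl | ⟨i, rfl⟩
  · exact ⟨Fin.elim0, Fin.elim0, 0, a, fun x => by simp⟩
  · exact ⟨Fin.elim0, Fin.elim0, a • LinearMap.proj i, 0, fun x => by simp [eval_monomial]⟩

theorem hasRank2_one_eval_monomial (i j : σ) (a : K) :
    HasRank2 (fun x => eval x (monomial (Finsupp.single i 1 + Finsupp.single j 1) a)) 1 :=
  ⟨fun _ => a • LinearMap.proj i, fun _ => LinearMap.proj j, 0, 0, fun x => by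
    simp [monomial_add_single, eval_monomial, mul_assoc]⟩

theorem IsPolyDegLE.hasRank2_zero {q : (σ → K) → K} (hq : IsPolyDegLE q 1) : HasRank2 q 0 :=
  hq.induction_on HasRank2.zero (fun _ _ h₁ h₂ => h₁.add h₂)
    fun _ a hs => hasRank2_zero_eval_monomial hs a

theorem IsPolyDegLE.exists_hasRank2 {q : (σ → K) → K} (hq : IsPolyDegLE q 2) :
    ∃ r, HasRank2 q r := by
  refine hq.induction_on ⟨0, HasRank2.zero⟩ (fun _ _ ⟨r₁, h₁⟩ ⟨r₂, h₂⟩ => ⟨_, h₁.add h₂⟩)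
    fun s a hs => ?_
  rcases Finsupp.degree_le_one_or_eq_single_add_single hs with hs | ⟨i, j, rfl⟩
  · exact ⟨0, hasRank2_zero_eval_monomial hs a⟩
  · exact ⟨1, hasRank2_one_eval_monomial i j a⟩

end LowDegree

theorem IsPolyDegLE.fwdDiff_smul_add_sub {σ : Type*} {p : ℕ} [Fact p.Prime]
    {f : (σ → ZMod p) → ZMod p} (hf : IsPolyDegLE f 3) (u v : σ → ZMod p) (α : ZMod p) :
    IsPolyDegLE (Δ_[α • u + v] f - α • Δ_[u] f - Δ_[v] f) 1 := by
  let φ : (σ → ZMod p) →+ ((σ → ZMod p) → ZMod p) ⧸ polyDegLE σ (ZMod p) 1 :=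
    { toFun := fun u => Submodule.Quotient.mk (Δ_[u] f)
      map_zero' := (Submodule.Quotient.mk_eq_zero _).mpr
        ⟨0, by simp, fun x => by rw [map_zero, _root_.fwdDiff, add_zero, sub_self]⟩
      map_add' := fun u v => by
        rw [← Submodule.Quotient.mk_add, Submodule.Quotient.eq]
        have h : Δ_[u + v] f - (Δ_[u] f + Δ_[v] f) =
            fun x => f (x + u + v) - f (x + u) - f (x + v) + f x := by
          ext x
          simp only [_root_.fwdDiff, Pi.sub_apply, Pi.add_apply, add_assoc]
          ring
        rw [h]
        exact hf.secondDiff u v }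
  have hφ : φ (α • u + v) = α • φ u + φ v := by rw [map_add, ZMod.map_smul]
  change Submodule.Quotient.mk _ = α • Submodule.Quotient.mk _ + Submodule.Quotient.mk _ at hφ
  rw [← Submodule.Quotient.mk_smul, ← Submodule.Quotient.mk_add, Submodule.Quotient.eq] at hφ
  rwa [sub_sub]

/-- For a cubic `f`: `Δ_{y+z} f = Δ_y f + Δ_z f + Δ_y Δ_z f`, where `Δ_y Δ_z f` has
degree at most 1; consequently `𝓕(y) = rank₂(Δ_y f)` is subadditive. -/
theorem stmt_7 {p n : ℕ} [Fact p.Prime] (f : (Fin n → ZMod p) → ZMod p)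
    (hf : IsPolyDegLE f 3) :
    (∀ y z x : Fin n → ZMod p,
      f (x + (y + z)) - f x =
        (f (x + y) - f x) + (f (x + z) - f x) +
          (f (x + y + z) - f (x + y) - f (x + z) + f x)) ∧
    (∀ y z : Fin n → ZMod p,
      IsPolyDegLE (fun x => f (x + y + z) - f (x + y) - f (x + z) + f x) 1) ∧
    (∀ (u v : Fin n → ZMod p) (α : ZMod p),
      rank2 (fun x => f (x + (α • u + v)) - f x) ≤
        rank2 (fun x => f (x + u) - f x) + rank2 (fun x => f (x + v) - f x)) := by
  refine ⟨fun y z x => by rw [← add_assoc]; ring, hf.secondDiff, fun u v α => ?_⟩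
  exact rank2_le_add_of_hasRank2_sub α (hf.fwdDiff u).exists_hasRank2
    (hf.fwdDiff v).exists_hasRank2 (hf.fwdDiff_smul_add_sub u v α).hasRank2_zero
end

section
/- Let Q : F^n → F be a quadratic polynomial over a prime field F and let A ∈ F^{n×n} be any matrix representing Q, i.e., Q(x) = xᵗAx + ℓ(x) for some affine ℓ. Then rank₂(Q) equals the minimal rank of any matrix representing Q, and moreover rank(A + Aᵗ)/2 ≤ rank₂(Q) ≤ rank(A + Aᵗ). -/
/-!
Upper bound: induct on the rank of `M = A + Aᵀ`. If `M ≠ 0`, choose `M i j ≠ 0`, with `i = j` if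
some diagonal entry is nonzero. Splitting off the product `s (M i ⬝ᵥ x) (M j ⬝ᵥ x)` from `xᵀAx`
subtracts `s (M i M jᵀ + M j M iᵀ)` from `M`; for the right `s` the result vanishes on `ker M` and
on `e i`, while `M e i ≠ 0`, so the rank of the symmetrization drops. When `M = 0`,
`xᵀAx = ∑ A i i * x i ^ 2` with `2 A i i = 0`, which is linear over a prime field: either `2 ≠ 0`
and `A i i = 0`, or `p = 2` and `y ^ 2 = y`. This is where primality is used.

Lower bound and the minimal-rank formula: a sum of `r` products `L k x * L' k x` is the form of
`Uᵀ W` with `U, W` having `r` rows; conversely a basis of the column space of `B` writes `xᵀBx` as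
a sum of `rank B` products. By polarization all matrices representing `Q` share `A + Aᵀ`, whose
rank is at most `2 rank B`.
-/

open Finset

/-- The matrix `A` represents the quadratic `Q` if `Q(x) = xᵗAx + ℓ(x)` for some
affine `ℓ`. -/
def Represents {K : Type*} [Field K] {n : ℕ} (A : Matrix (Fin n) (Fin n) K)
    (Q : (Fin n → K) → K) : Prop :=
  ∃ (L0 : (Fin n → K) →ₗ[K] K) (b : K),
    ∀ x, Q x = (∑ i, ∑ j, x i * A i j * x j) + L0 x + b

open Matrix hiding Represents

section HasRank2

variable {K M : Type*} [Field K] [AddCommGroup M] [Module K M] {q : M → K} {r s : ℕ}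

lemma hasRank2_zero (L : M →ₗ[K] K) : HasRank2 L 0 :=
  ⟨Fin.elim0, Fin.elim0, L, 0, by simp⟩

lemma HasRank2.mono (h : HasRank2 q r) (hrs : r ≤ s) : HasRank2 q s := by
  obtain ⟨d, rfl⟩ := Nat.exists_eq_add_of_le hrs
  obtain ⟨L, L', L0, b, hq⟩ := h
  refine ⟨Fin.append L 0, Fin.append L' 0, L0, b, fun x => ?_⟩
  simp [hq x, Fin.sum_univ_add]

lemma HasRank2.add_affine (h : HasRank2 q r) (L : M →ₗ[K] K) (c : K) :
    HasRank2 (fun x => q x + L x + c) r := by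
  obtain ⟨L₁, L₂, L0, b, hq⟩ := h
  exact ⟨L₁, L₂, L0 + L, b + c, fun x => by simp only [hq x, LinearMap.add_apply]; ring⟩

lemma HasRank2.add_mul (h : HasRank2 q r) (f g : M →ₗ[K] K) :
    HasRank2 (fun x => q x + f x * g x) (r + 1) := by
  obtain ⟨L, L', L0, b, hq⟩ := h
  exact ⟨Fin.cons f L, Fin.cons g L', L0, b, fun x => by
    simp only [hq x, Fin.sum_univ_succ, Fin.cons_zero, Fin.cons_succ]; ring⟩

end HasRank2

section QuadraticForm

variable {R ι : Type*} [CommRing R] [Fintype ι]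

lemma sum_sum_mul_mul_eq_dotProduct_mulVec (A : Matrix ι ι R) (x : ι → R) :
    ∑ i, ∑ j, x i * A i j * x j = x ⬝ᵥ A *ᵥ x := by
  simp [dotProduct, mulVec, mul_sum, mul_assoc]

lemma dotProduct_vecMulVec_mulVec_self (u w x : ι → R) :
    x ⬝ᵥ vecMulVec u w *ᵥ x = (u ⬝ᵥ x) * (w ⬝ᵥ x) := by
  simp [vecMulVec_mulVec, dotProduct_comm x, mul_comm]

lemma dotProduct_sub_vecMulVec_mulVec_self (A : Matrix ι ι R) (u w x : ι → R) :
    x ⬝ᵥ (A - vecMulVec u w) *ᵥ x + (u ⬝ᵥ x) * (w ⬝ᵥ x) = x ⬝ᵥ A *ᵥ x := by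
  rw [sub_mulVec, dotProduct_sub, dotProduct_vecMulVec_mulVec_self, sub_add_cancel]

lemma add_dotProduct_mulVec_add (A : Matrix ι ι R) (x y : ι → R) :
    (x + y) ⬝ᵥ A *ᵥ (x + y) = x ⬝ᵥ A *ᵥ x + y ⬝ᵥ A *ᵥ y + x ⬝ᵥ (A + Aᵀ) *ᵥ y := by
  simp only [mulVec_add, add_dotProduct, dotProduct_add, add_mulVec, dotProduct_transpose_mulVec]
  ring

lemma add_transpose_eq_zero_of_dotProduct_mulVec_self_eq [DecidableEq ι] {C : Matrix ι ι R}
    {L : (ι → R) →ₗ[R] R} {c : R} (h : ∀ x, x ⬝ᵥ C *ᵥ x = L x + c) : C + Cᵀ = 0 := by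
  ext i j
  have hpolar := add_dotProduct_mulVec_add C (Pi.single i 1) (Pi.single j 1)
  have hc : c = 0 := by simpa using (h 0).symm
  rw [h, h, h] at hpolar
  simpa [hc, mulVec_single_one, single_one_dotProduct] using hpolar

lemma dotProduct_mulVec_self_eq_sum_diag [LinearOrder ι] {A : Matrix ι ι R} (hA : A + Aᵀ = 0)
    (x : ι → R) : x ⬝ᵥ A *ᵥ x = ∑ i, A i i * x i ^ 2 := by
  classical
  -- `U` is the strict upper triangle of `A`; the forms of `U` and `Uᵀ` cancel.
  set U : Matrix ι ι R := of fun i j => if i < j then A i j else 0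
  have hskew : ∀ i j, A j i = -A i j := fun i j => by
    simpa [eq_neg_iff_add_eq_zero, add_comm] using congrFun (congrFun hA i) j
  have hdecomp : A = U - Uᵀ + diagonal (diag A) := by
    ext i j
    rcases lt_trichotomy i j with h | rfl | h
    · simp [U, h, h.ne, h.not_gt]
    · simp [U]
    · simp [U, h, h.ne', h.not_gt, hskew j i]
  rw [hdecomp, add_mulVec, sub_mulVec, dotProduct_add, dotProduct_sub,
    dotProduct_transpose_mulVec, sub_self, zero_add]
  simp [dotProduct, mulVec_diagonal, sq, mul_left_comm]

end QuadraticForm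

lemma ZMod.mul_sq_eq_mul_of_add_self_eq_zero {p : ℕ} [Fact p.Prime] {a : ZMod p}
    (ha : a + a = 0) (y : ZMod p) : a * y ^ 2 = a * y := by
  by_cases hp : p = 2
  · subst hp
    rw [ZMod.pow_card]
  · have h2 : (2 : ZMod p) ≠ 0 := Ring.two_ne_zero (by rwa [ZMod.ringChar_zmod_n])
    have ha0 : a = 0 := by
      rw [← two_mul] at ha
      exact (mul_eq_zero.mp ha).resolve_left h2
    simp [ha0]

namespace Matrix

variable {K m n : Type*} [Field K] [Fintype n]

lemma rank_add_le (A B : Matrix m n K) : (A + B).rank ≤ A.rank + B.rank := by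
  rw [rank, mulVecLin_add]
  exact (Submodule.finrank_mono (LinearMap.range_add_le _ _)).trans
    (Submodule.finrank_add_le_finrank_add_finrank _ _)

lemma rank_lt_rank_of_ker_lt {A B : Matrix m n K}
    (h : LinearMap.ker A.mulVecLin < LinearMap.ker B.mulVecLin) : B.rank < A.rank := by
  have hA := LinearMap.finrank_range_add_finrank_ker A.mulVecLin
  have hB := LinearMap.finrank_range_add_finrank_ker B.mulVecLin
  have := Submodule.finrank_lt_finrank_of_lt h
  unfold rank
  omega

end Matrix

section Reduction

variable {K ι : Type*} [Field K] [Fintype ι] [DecidableEq ι]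

lemma rank_sub_vecMulVec_add_vecMulVec_lt {M : Matrix ι ι K} (hM : Mᵀ = M) {i j : ι} {s : K}
    (hij : M i j ≠ 0) (hs : s • (M i j • M i + M i i • M j) = M i) :
    (M - (vecMulVec (s • M i) (M j) + vecMulVec (M j) (s • M i))).rank < M.rank := by
  apply rank_lt_rank_of_ker_lt
  rw [SetLike.lt_iff_le_and_exists]
  refine ⟨fun y hy => ?_, Pi.single i 1, ?_, ?_⟩
  · have hy : M *ᵥ y = 0 := hy
    have hrow : ∀ k, M k ⬝ᵥ y = 0 := fun k => congrFun hy k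
    simp [LinearMap.mem_ker, vecMulVec_mulVec, hy, hrow]
  · have hcol : ∀ k, M k i = M i k := fun k => by rw [← transpose_apply M i k, hM]
    have hsk : ∀ k, s * (M i j * M i k + M i i * M j k) = M i k := fun k => by
      simpa using congrFun hs k
    ext k
    simp only [mulVecLin_apply, mulVec_single_one, col_apply, Matrix.sub_apply, Matrix.add_apply,
      vecMulVec_apply, Pi.smul_apply, smul_eq_mul, Pi.zero_apply, hcol k, hcol j]
    linear_combination -hsk k
  · intro hker
    have hji := congrFun (show M *ᵥ Pi.single i 1 = 0 from hker) j
    rw [mulVec_single_one, ← hM] at hji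
    exact hij hji

lemma exists_rank_add_transpose_sub_vecMulVec_lt {A : Matrix ι ι K} (hA : A + Aᵀ ≠ 0) :
    ∃ u w : ι → K, ((A - vecMulVec u w) + (A - vecMulVec u w)ᵀ).rank < (A + Aᵀ).rank := by
  set M := A + Aᵀ with hMdef
  have hM : Mᵀ = M := by rw [transpose_add, transpose_transpose, add_comm]
  suffices ∃ i j s, M i j ≠ 0 ∧ s • (M i j • M i + M i i • M j) = M i by
    obtain ⟨i, j, s, hij, hs⟩ := this
    refine ⟨s • M i, M j, lt_of_eq_of_lt ?_ (rank_sub_vecMulVec_add_vecMulVec_lt hM hij hs)⟩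
    rw [transpose_sub, transpose_vecMulVec, hMdef]
    congr 1
    abel
  by_cases hdiag : ∀ i, M i i = 0
  · obtain ⟨i, j, hij⟩ : ∃ i j, M i j ≠ 0 := by
      by_contra! h
      exact hA (Matrix.ext h)
    refine ⟨i, j, (M i j)⁻¹, hij, ?_⟩
    rw [hdiag i, zero_smul, add_zero, smul_smul, inv_mul_cancel₀ hij, one_smul]
  · obtain ⟨i, hi⟩ := not_forall.mp hdiag
    have h2 : (2 : K) ≠ 0 := fun h2 => hi <| by
      rw [hMdef, Matrix.add_apply, transpose_apply, ← two_mul, h2, zero_mul]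
    refine ⟨i, i, (2 * M i i)⁻¹, hi, ?_⟩
    rw [← add_smul, smul_smul, ← two_mul, inv_mul_cancel₀ (mul_ne_zero h2 hi), one_smul]

end Reduction

theorem hasRank2_dotProduct_mulVec_self_rank_add_transpose {p n : ℕ} [Fact p.Prime]
    (A : Matrix (Fin n) (Fin n) (ZMod p)) :
    HasRank2 (fun x => x ⬝ᵥ A *ᵥ x) (A + Aᵀ).rank := by
  induction hr : (A + Aᵀ).rank using Nat.strong_induction_on generalizing A with
  | _ r ih =>
  by_cases hA : A + Aᵀ = 0
  · have hlin : (fun x => x ⬝ᵥ A *ᵥ x) = dotProductEquiv (ZMod p) (Fin n) (diag A) := by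
      ext x
      rw [dotProduct_mulVec_self_eq_sum_diag hA, dotProductEquiv_apply_apply]
      refine sum_congr rfl fun i _ => ?_
      rw [ZMod.mul_sq_eq_mul_of_add_self_eq_zero (by simpa using congrFun (congrFun hA i) i)]
      rfl
    exact hlin ▸ (hasRank2_zero _).mono (Nat.zero_le r)
  obtain ⟨u, w, hlt⟩ := exists_rank_add_transpose_sub_vecMulVec_lt hA
  have hsplit := (ih _ (hr ▸ hlt) _ rfl).add_mul (dotProductEquiv _ _ u) (dotProductEquiv _ _ w)
  simp only [dotProductEquiv_apply_apply, dotProduct_sub_vecMulVec_mulVec_self] at hsplit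
  exact hsplit.mono (hr ▸ hlt)

lemma hasRank2_dotProduct_mulVec_self_rank {K ι : Type*} [Field K] [Fintype ι] [DecidableEq ι]
    (B : Matrix ι ι K) : HasRank2 (fun x => x ⬝ᵥ B *ᵥ x) B.rank := by
  let β : Module.Basis (Fin B.rank) K (LinearMap.range B.mulVecLin) :=
    Module.finBasisOfFinrankEq K _ rfl
  refine ⟨fun k => (β.coord k).comp B.mulVecLin.rangeRestrict,
    fun k => dotProductEquiv K ι (β k), 0, 0, fun x => ?_⟩
  have hBx : B *ᵥ x = ∑ k, β.repr (B.mulVecLin.rangeRestrict x) k • (β k : ι → K) := by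
    have h := congrArg Subtype.val (β.sum_repr (B.mulVecLin.rangeRestrict x))
    simp only [Submodule.coe_sum, Submodule.coe_smul] at h
    exact h.symm
  change x ⬝ᵥ B *ᵥ x = _
  rw [hBx, dotProduct_sum]
  simp [Module.Basis.coord_apply, dotProduct_comm x]

section Represents

variable {K : Type*} [Field K] {n r : ℕ} {Q : (Fin n → K) → K}

lemma represents_iff {A : Matrix (Fin n) (Fin n) K} :
    Represents A Q ↔
      ∃ (L0 : (Fin n → K) →ₗ[K] K) (b : K), ∀ x, Q x = x ⬝ᵥ A *ᵥ x + L0 x + b := by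
  simp only [Represents, sum_sum_mul_mul_eq_dotProduct_mulVec]

lemma Represents.hasRank2_rank {B : Matrix (Fin n) (Fin n) K} (hB : Represents B Q) :
    HasRank2 Q B.rank := by
  obtain ⟨L0, b, hQ⟩ := represents_iff.1 hB
  simpa only [← hQ] using (hasRank2_dotProduct_mulVec_self_rank B).add_affine L0 b

lemma HasRank2.exists_represents (h : HasRank2 Q r) :
    ∃ B : Matrix (Fin n) (Fin n) K, Represents B Q ∧ B.rank ≤ r := by
  obtain ⟨L, L', L0, b, hQ⟩ := h
  let U : Matrix (Fin r) (Fin n) K := of fun k => (dotProductEquiv K _).symm (L k)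
  let W : Matrix (Fin r) (Fin n) K := of fun k => (dotProductEquiv K _).symm (L' k)
  refine ⟨Uᵀ * W, represents_iff.2 ⟨L0, b, fun x => ?_⟩,
    (rank_mul_le_right _ _).trans (rank_le_height W)⟩
  have hdual (f : (Fin n → K) →ₗ[K] K) : (dotProductEquiv K _).symm f ⬝ᵥ x = f x := by
    rw [← dotProductEquiv_apply_apply, LinearEquiv.apply_symm_apply]
  rw [hQ, ← mulVec_mulVec, dotProduct_mulVec, vecMul_transpose, dotProduct]
  simp only [mulVec, U, W, of_apply, hdual]

lemma Represents.add_transpose_eq {A B : Matrix (Fin n) (Fin n) K} (hA : Represents A Q)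
    (hB : Represents B Q) : A + Aᵀ = B + Bᵀ := by
  obtain ⟨L₁, b₁, h₁⟩ := represents_iff.1 hA
  obtain ⟨L₂, b₂, h₂⟩ := represents_iff.1 hB
  have h := add_transpose_eq_zero_of_dotProduct_mulVec_self_eq (C := A - B) (L := L₂ - L₁)
    (c := b₂ - b₁) fun x => by
      rw [sub_mulVec, dotProduct_sub, LinearMap.sub_apply]
      linear_combination h₂ x - h₁ x
  rw [← sub_eq_zero, ← h, transpose_sub]
  abel

lemma Represents.hasRank2_rank_add_transpose {p : ℕ} [Fact p.Prime]
    {Q : (Fin n → ZMod p) → ZMod p} {A : Matrix (Fin n) (Fin n) (ZMod p)}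
    (hA : Represents A Q) : HasRank2 Q (A + Aᵀ).rank := by
  obtain ⟨L0, b, hQ⟩ := represents_iff.1 hA
  simpa only [← hQ] using (hasRank2_dotProduct_mulVec_self_rank_add_transpose A).add_affine L0 b

end Represents

/-- `rank₂(Q)` equals the minimal rank of any matrix representing `Q`, and for any
matrix `A` representing `Q`, `rank(A+Aᵗ)/2 ≤ rank₂(Q) ≤ rank(A+Aᵗ)`. -/
theorem stmt_14 {p n : ℕ} [Fact p.Prime] (Q : (Fin n → ZMod p) → ZMod p)
    (A : Matrix (Fin n) (Fin n) (ZMod p)) (hA : Represents A Q) :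
    rank2 Q = sInf {r | ∃ B : Matrix (Fin n) (Fin n) (ZMod p),
      Represents B Q ∧ B.rank = r} ∧
    (A + A.transpose).rank ≤ 2 * rank2 Q ∧
    rank2 Q ≤ (A + A.transpose).rank := by
  have hQA : HasRank2 Q (A + Aᵀ).rank := hA.hasRank2_rank_add_transpose
  have hmin : HasRank2 Q (rank2 Q) := Nat.sInf_mem (s := {r | HasRank2 Q r}) ⟨_, hQA⟩
  obtain ⟨B, hB, hBr⟩ := hmin.exists_represents
  refine ⟨le_antisymm ?_ ?_, ?_, Nat.sInf_le hQA⟩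
  · refine le_csInf ⟨A.rank, A, hA, rfl⟩ ?_
    rintro _ ⟨C, hC, rfl⟩
    exact Nat.sInf_le hC.hasRank2_rank
  · exact le_trans (Nat.sInf_le ⟨B, hB, rfl⟩) hBr
  · calc (A + Aᵀ).rank = (B + Bᵀ).rank := by rw [hA.add_transpose_eq hB]
      _ ≤ B.rank + Bᵀ.rank := rank_add_le _ _
      _ ≤ 2 * rank2 Q := by rw [rank_transpose]; omega
end

section
/- Let F : F^d → F be a polynomial such that deg(F(α+β) − F(α) − F(β)) ≤ 2 as a polynomial in the 2d variables (α, β). Then deg(F) ≤ 2. -/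
universe u

namespace MvPolynomial

section Reduction

/-- `e` modulo `q - 1`, taken in `1, …, q - 1` when `e ≠ 0`: on a field with `q` elements
`a ^ e` depends on `e` only through this. -/
def reduceExponent (q e : ℕ) : ℕ := if e = 0 then 0 else (e - 1) % (q - 1) + 1

theorem reduceExponent_zero (q : ℕ) : reduceExponent q 0 = 0 := rfl

theorem reduceExponent_le (q e : ℕ) : reduceExponent q e ≤ e := by
  unfold reduceExponent
  split
  · omega
  · have := Nat.mod_le (e - 1) (q - 1); omega

theorem reduceExponent_le_sub_one {q : ℕ} (hq : 1 < q) (e : ℕ) :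
    reduceExponent q e ≤ q - 1 := by
  unfold reduceExponent
  split
  · omega
  · have : (e - 1) % (q - 1) < q - 1 := Nat.mod_lt _ (by omega)
    omega

variable {K : Type*} [Field K] [Fintype K] {σ : Type*}

theorem pow_reduceExponent (a : K) (e : ℕ) : a ^ reduceExponent (Fintype.card K) e = a ^ e := by
  unfold reduceExponent
  split_ifs with he
  · rw [he]
  rcases eq_or_ne a 0 with rfl | ha
  · rw [zero_pow he, zero_pow (by omega)]
  · have hdiv := Nat.div_add_mod (e - 1) (Fintype.card K - 1)
    calc a ^ ((e - 1) % (Fintype.card K - 1) + 1)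
        = (a ^ (Fintype.card K - 1)) ^ ((e - 1) / (Fintype.card K - 1)) *
            a ^ ((e - 1) % (Fintype.card K - 1) + 1) := by
          rw [FiniteField.pow_card_sub_one_eq_one a ha, one_pow, one_mul]
      _ = a ^ e := by rw [← pow_mul, ← pow_add]; congr 1; omega

/-- The reduced representative of `Q`, with all exponents below the cardinality of `K`. -/
noncomputable def reduceExponents (Q : MvPolynomial σ K) : MvPolynomial σ K :=
  ∑ e ∈ Q.support,
    monomial (e.mapRange (reduceExponent (Fintype.card K)) (reduceExponent_zero _)) (coeff e Q)

theorem eval_reduceExponents (Q : MvPolynomial σ K) (x : σ → K) :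
    eval x (reduceExponents Q) = eval x Q := by
  conv_rhs => rw [Q.as_sum]
  simp only [reduceExponents, map_sum, eval_monomial]
  refine Finset.sum_congr rfl fun e _ => congrArg _ ?_
  rw [Finsupp.prod_mapRange_index fun _ => pow_zero _]
  exact Finsupp.prod_congr fun j _ => pow_reduceExponent (x j) (e j)

theorem totalDegree_reduceExponents_le (Q : MvPolynomial σ K) :
    (reduceExponents Q).totalDegree ≤ Q.totalDegree := by
  refine (totalDegree_finsetSum _ _).trans (Finset.sup_le fun e he => ?_)
  refine (totalDegree_monomial_le _ _).trans (le_trans ?_ (le_totalDegree he))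
  rw [Finsupp.sum_mapRange_index fun _ => rfl]
  exact Finset.sum_le_sum fun j _ => reduceExponent_le _ (e j)

theorem reduceExponents_mem_restrictDegree (Q : MvPolynomial σ K) :
    reduceExponents Q ∈ restrictDegree σ K (Fintype.card K - 1) := by
  refine sum_mem fun e _ => (mem_restrictDegree _ _ _).mpr fun m hm i => ?_
  rw [Finset.mem_singleton.mp (support_monomial_subset hm), Finsupp.mapRange_apply]
  exact reduceExponent_le_sub_one Fintype.one_lt_card _

theorem eq_of_eval_eq_of_mem_restrictDegree {σ K : Type u} [Field K] [Fintype K] [Finite σ]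
    {f g : MvPolynomial σ K}
    (hf : f ∈ restrictDegree σ K (Fintype.card K - 1))
    (hg : g ∈ restrictDegree σ K (Fintype.card K - 1)) (h : ∀ x, eval x f = eval x g) :
    f = g :=
  sub_eq_zero.mp <| eq_zero_of_eval_eq_zero σ K _ (fun x => by rw [map_sub, h, sub_self])
    (sub_mem hf hg)

end Reduction

section Degree

variable {R : Type*} [CommSemiring R] {σ τ : Type*}

theorem mem_restrictDegree_iff_degreeOf_le (f : MvPolynomial σ R) (n : ℕ) :
    f ∈ restrictDegree σ R n ↔ ∀ i, degreeOf i f ≤ n := by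
  simp only [mem_restrictDegree, degreeOf_le_iff]
  exact ⟨fun h i m hm => h m hm i, fun h m hm i => h i m hm⟩

theorem degreeOf_X_le [DecidableEq σ] (i j : σ) :
    degreeOf i (X j : MvPolynomial σ R) ≤ if i = j then 1 else 0 := by
  split_ifs with h
  · exact (degreeOf_le_totalDegree _ _).trans ((totalDegree_monomial_le _ _).trans (by simp))
  · exact (degreeOf_X_of_ne h).le

theorem rename_mem_restrictDegree {f : σ → τ} (hf : Function.Injective f)
    {P : MvPolynomial σ R} {n : ℕ} (hP : P ∈ restrictDegree σ R n) :
    rename f P ∈ restrictDegree τ R n := by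
  classical
  rw [mem_restrictDegree] at hP ⊢
  intro m hm t
  obtain ⟨u, hu, rfl⟩ := Finset.mem_image.mp ((support_rename_of_injective hf).subset hm)
  by_cases ht : t ∈ Set.range f
  · obtain ⟨k, rfl⟩ := ht
    rw [Finsupp.mapDomain_apply hf]
    exact hP u hu k
  · rw [Finsupp.mapDomain_of_notMem_range _ _ ht]
    exact Nat.zero_le n

theorem totalDegree_pderiv_le (i : σ) (f : MvPolynomial σ R) :
    (pderiv i f).totalDegree ≤ f.totalDegree - 1 := by
  refine Finset.sup_le fun m hm => ?_
  have hf : m + Finsupp.single i 1 ∈ f.support := by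
    rw [mem_support_iff, coeff_pderiv] at hm
    exact mem_support_iff.mpr (left_ne_zero_of_mul hm)
  have := le_totalDegree hf
  rw [Finsupp.sum_add_index' (fun _ => rfl) (fun _ _ _ => rfl),
    Finsupp.sum_single_index rfl] at this
  omega

theorem totalDegree_aeval_le {g : σ → MvPolynomial τ R} (hg : ∀ j, (g j).totalDegree ≤ 1)
    (f : MvPolynomial σ R) : (aeval g f).totalDegree ≤ f.totalDegree := by
  conv_lhs => rw [f.as_sum]
  rw [map_sum]
  refine (totalDegree_finsetSum _ _).trans (Finset.sup_le fun e he => ?_)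
  rw [aeval_monomial, algebraMap_eq]
  refine (totalDegree_mul _ _).trans ?_
  rw [totalDegree_C, zero_add]
  refine (totalDegree_finsetProd _ _).trans (le_trans ?_ (le_totalDegree he))
  refine Finset.sum_le_sum fun j _ => (totalDegree_pow _ _).trans ?_
  simpa using Nat.mul_le_mul_left (e j) (hg j)

theorem totalDegree_le_of_forall_totalDegree_pderiv_le [NoZeroDivisors R] (p : ℕ) [CharP R p]
    {P : MvPolynomial σ R} (hP : P ∈ restrictDegree σ R (p - 1)) {n : ℕ}
    (h : ∀ i, (pderiv i P).totalDegree ≤ n) :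
    P.totalDegree ≤ n + 1 := by
  refine Finset.sup_le fun e he => ?_
  rcases eq_or_ne e 0 with rfl | hne
  · simp
  obtain ⟨i, hi⟩ := Finsupp.support_nonempty_iff.mpr hne
  have hei : 0 < e i := Nat.pos_of_ne_zero (Finsupp.mem_support_iff.mp hi)
  have hle : e i ≤ p - 1 := (mem_restrictDegree _ _ _).mp hP e he i
  set m := e - Finsupp.single i 1
  have hm : m + Finsupp.single i 1 = e :=
    tsub_add_cancel_of_le (Finsupp.single_le_iff.mpr (by omega))
  have hmi : m i + 1 = e i := by rw [← hm, Finsupp.add_apply, Finsupp.single_eq_same]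
  -- `0 < e i < p`, so the exponent `e i` brought down by `∂ᵢ` does not vanish in `R`
  have hcoeff : coeff m (pderiv i P) ≠ 0 := by
    rw [coeff_pderiv, hm]
    refine mul_ne_zero (mem_support_iff.mp he) ?_
    rw [← Nat.cast_one, ← Nat.cast_add, hmi, Ne, CharP.cast_eq_zero_iff R p]
    intro hdvd
    have := Nat.le_of_dvd hei hdvd
    omega
  have hdeg := (le_totalDegree (mem_support_iff.mpr hcoeff)).trans (h i)
  rw [← hm, Finsupp.sum_add_index' (fun _ => rfl) (fun _ _ _ => rfl),
    Finsupp.sum_single_index rfl]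
  omega

end Degree

section AddDefect

variable {R : Type*} [CommRing R] {σ : Type*}

/-- `P(α + β)`, where `α = X ∘ Sum.inl` and `β = X ∘ Sum.inr`. -/
noncomputable def addSubst (P : MvPolynomial σ R) : MvPolynomial (σ ⊕ σ) R :=
  bind₁ (fun j => X (Sum.inl j) + X (Sum.inr j)) P

noncomputable def addDefect (P : MvPolynomial σ R) : MvPolynomial (σ ⊕ σ) R :=
  addSubst P - rename Sum.inl P - rename Sum.inr P

noncomputable def evalInrZero : MvPolynomial (σ ⊕ σ) R →ₐ[R] MvPolynomial σ R :=
  aeval (Sum.elim X 0)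

theorem eval_addDefect (P : MvPolynomial σ R) (x : σ ⊕ σ → R) :
    eval x (addDefect P) = eval (fun i => x (Sum.inl i) + x (Sum.inr i)) P -
      eval (x ∘ Sum.inl) P - eval (x ∘ Sum.inr) P := by
  rw [addDefect, addSubst, map_sub, map_sub, eval_rename, eval_rename]
  congr 2
  exact (eval₂Hom_bind₁ (RingHom.id R) x _ P).trans (by simp)

theorem pderiv_inr_addSubst (i : σ) (P : MvPolynomial σ R) :
    pderiv (Sum.inr i) (addSubst P) = addSubst (pderiv i P) := by
  classical
  induction P using MvPolynomial.induction_on with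
  | C a => simp [addSubst]
  | add p q hp hq => simp only [addSubst, map_add] at hp hq ⊢; rw [hp, hq]
  | mul_X q j ih =>
    simp only [addSubst] at ih ⊢
    simp only [map_mul, bind₁_X_right, Derivation.leibniz, map_add, pderiv_X, ih,
      Pi.single_apply, smul_eq_mul, reduceCtorEq, Sum.inr.injEq, if_false, zero_add,
      apply_ite (bind₁ _), map_one, map_zero]

theorem evalInrZero_addSubst (P : MvPolynomial σ R) : evalInrZero (addSubst P) = P := by
  rw [addSubst, evalInrZero, aeval_eq_bind₁, bind₁_bind₁]
  simp

theorem evalInrZero_rename_inr (P : MvPolynomial σ R) :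
    evalInrZero (rename Sum.inr P) = C (constantCoeff P) := by
  rw [evalInrZero, aeval_rename, Sum.elim_comp_inr, aeval_zero]
  rfl

theorem pderiv_inr_rename_inl (i : σ) (P : MvPolynomial σ R) :
    pderiv (Sum.inr i) (rename Sum.inl P) = 0 := by
  classical
  refine pderiv_eq_zero_of_notMem_vars fun h => ?_
  obtain ⟨j, -, hj⟩ := Finset.mem_image.mp (vars_rename _ _ h)
  exact Sum.inl_ne_inr hj

theorem evalInrZero_pderiv_inr_addDefect (i : σ) (P : MvPolynomial σ R) :
    evalInrZero (pderiv (Sum.inr i) (addDefect P)) =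
      pderiv i P - C (constantCoeff (pderiv i P)) := by
  rw [addDefect, (pderiv _).map_sub, (pderiv _).map_sub, pderiv_inr_addSubst,
    pderiv_inr_rename_inl, pderiv_rename Sum.inr_injective, sub_zero, map_sub,
    evalInrZero_addSubst, evalInrZero_rename_inr]

theorem totalDegree_evalInrZero_le (f : MvPolynomial (σ ⊕ σ) R) :
    (evalInrZero f).totalDegree ≤ f.totalDegree := by
  refine totalDegree_aeval_le (fun s => ?_) f
  cases s
  · exact (totalDegree_monomial_le _ _).trans (by simp)
  · simp

theorem totalDegree_pderiv_le_of_totalDegree_addDefect_le {P : MvPolynomial σ R} {n : ℕ}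
    (h : (addDefect P).totalDegree ≤ n + 1) (i : σ) : (pderiv i P).totalDegree ≤ n := by
  have hev := (totalDegree_evalInrZero_le (pderiv (Sum.inr i) (addDefect P))).trans
    (totalDegree_pderiv_le _ _)
  calc (pderiv i P).totalDegree
      = (evalInrZero (pderiv (Sum.inr i) (addDefect P)) +
          C (constantCoeff (pderiv i P))).totalDegree := by
        rw [evalInrZero_pderiv_inr_addDefect, sub_add_cancel]
    _ ≤ n := (totalDegree_add _ _).trans (max_le (by omega) (by rw [totalDegree_C]; omega))

theorem degreeOf_addSubst_le (P : MvPolynomial σ R) (s : σ ⊕ σ) :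
    degreeOf s (addSubst P) ≤ degreeOf (Sum.elim id id s) P := by
  classical
  conv_lhs => rw [P.as_sum]
  rw [addSubst, map_sum]
  refine (degreeOf_sum_le _ _ _).trans (Finset.sup_le fun e he => ?_)
  rw [bind₁_monomial]
  refine (degreeOf_C_mul_le _ _ _).trans ((degreeOf_prod_le _ _ _).trans ?_)
  refine le_trans ?_ (monomial_le_degreeOf _ he)
  calc ∑ j ∈ e.support, degreeOf s ((X (Sum.inl j) + X (Sum.inr j)) ^ e j)
      ≤ ∑ j ∈ e.support, if Sum.elim id id s = j then e j else 0 := by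
        refine Finset.sum_le_sum fun j _ => (degreeOf_pow_le _ _ _).trans ?_
        have hX : degreeOf s (X (Sum.inl j) + X (Sum.inr j) : MvPolynomial (σ ⊕ σ) R) ≤
            if Sum.elim id id s = j then 1 else 0 := by
          refine (degreeOf_add_le _ _ _).trans (max_le ?_ ?_) <;>
            refine (degreeOf_X_le _ _).trans ?_ <;> cases s <;> split_ifs <;> simp_all
        refine (Nat.mul_le_mul_left _ hX).trans ?_
        split_ifs <;> simp
    _ ≤ e (Sum.elim id id s) := by
        rw [Finset.sum_ite_eq]
        split_ifs <;> simp

theorem addDefect_mem_restrictDegree {P : MvPolynomial σ R} {n : ℕ}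
    (hP : P ∈ restrictDegree σ R n) : addDefect P ∈ restrictDegree (σ ⊕ σ) R n := by
  refine sub_mem (sub_mem ?_ (rename_mem_restrictDegree Sum.inl_injective hP))
    (rename_mem_restrictDegree Sum.inr_injective hP)
  rw [mem_restrictDegree_iff_degreeOf_le] at hP ⊢
  exact fun s => (degreeOf_addSubst_le P s).trans (hP _)

end AddDefect

end MvPolynomial

open MvPolynomial in
/-- If `F` is a polynomial function on `F^d` such that
`(α, β) ↦ F(α+β) - F(α) - F(β)` has degree at most 2 as a polynomial function of
the `2d` variables `(α, β)`, then `F` itself has degree at most 2. -/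
theorem stmt_17 {p d : ℕ} [Fact p.Prime] (F : (Fin d → ZMod p) → ZMod p)
    (hF : ∃ P : MvPolynomial (Fin d) (ZMod p), ∀ x, MvPolynomial.eval x P = F x)
    (h : IsPolyDegLE (fun z : (Fin d ⊕ Fin d) → ZMod p =>
        F (fun i => z (Sum.inl i) + z (Sum.inr i)) -
          F (fun i => z (Sum.inl i)) - F (fun i => z (Sum.inr i))) 2) :
    IsPolyDegLE F 2 := by
  obtain ⟨P₀, hP₀⟩ := hF
  obtain ⟨Q, hQdeg, hQ⟩ := h
  set P := reduceExponents P₀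
  have hP : P ∈ restrictDegree (Fin d) (ZMod p) (p - 1) := by
    simpa only [ZMod.card] using reduceExponents_mem_restrictDegree P₀
  have hPF : ∀ x, eval x P = F x := fun x => (eval_reduceExponents P₀ x).trans (hP₀ x)
  have hdefect : addDefect P = reduceExponents Q := by
    refine eq_of_eval_eq_of_mem_restrictDegree ?_ (reduceExponents_mem_restrictDegree Q)
      fun x => ?_
    · simpa only [ZMod.card] using addDefect_mem_restrictDegree hP
    · rw [eval_addDefect, hPF, hPF, hPF, eval_reduceExponents, hQ]; rfl
  have hdeg : (addDefect P).totalDegree ≤ 1 + 1 :=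
    hdefect ▸ (totalDegree_reduceExponents_le Q).trans hQdeg
  exact ⟨P, totalDegree_le_of_forall_totalDegree_pderiv_le p hP
    (totalDegree_pderiv_le_of_totalDegree_addDefect_le hdeg), hPF⟩
end
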